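/- In a finite concurrent reachability game ⟨C,⊤⟩ with value vector m, for every ε > 0 there exist a Player A strategy s_A and a natural number n such that for every state q and every Player B strategy s_B, the probability under (s_A, s_B) of reaching ⊤ from q within n steps is at least m(q) − ε; consequently val(s_A)(q) ≥ m(q) − ε for all q, and sup_{s_A} inf_{s_B} P^{s_A,s_B}_q(⊤) ≥ m(q). -/

import Mathlib

open scoped BigOperators Classical

noncomputable section

/-- A probability distribution on a finite type. -/
def FDist (X : Type) [Fintype X] : Type :=
  { p : X → ℝ // (∀ x, 0 ≤ p x) ∧ ∑ x, p x = 1 }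

namespace CRG

variable {A B Q D : Type} [Fintype A] [Fintype B] [Fintype Q] [Fintype D]

/-- The support of a distribution. -/
def supp {X : Type} [Fintype X] (σ : FDist X) : Set X := { x | σ.1 x ≠ 0 }

/-- The Dirac distribution. -/
def dirac {X : Type} [Fintype X] [DecidableEq X] (x : X) : FDist X :=
  ⟨fun y => if y = x then 1 else 0, by
    constructor
    · intro y
      dsimp only
      split <;> norm_num
    · simp⟩

/-- Outcome of a pair of mixed strategies in the game in normal form with payoff `u`. -/
def out (u : A → B → ℝ) (σA : FDist A) (σB : FDist B) : ℝ :=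
  ∑ a, ∑ b, σA.1 a * σB.1 b * u a b

/-- Outcome of a mixed strategy of Player A against a pure action of Player B. -/
def outB (u : A → B → ℝ) (σA : FDist A) (b : B) : ℝ :=
  ∑ a, σA.1 a * u a b

/-- The value of a Player A mixed strategy in a game in normal form. -/
def valStratGF (u : A → B → ℝ) (σA : FDist A) : ℝ :=
  ⨅ σB : FDist B, out u σA σB

/-- The (von Neumann) value of a finite game in normal form. -/
def valGF (u : A → B → ℝ) : ℝ :=
  ⨆ σA : FDist A, valStratGF u σA

/-- The optimal Player A mixed strategies in a game in normal form. -/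
def OptA (u : A → B → ℝ) : Set (FDist A) := { σA | valStratGF u σA = valGF u }

/-- The optimal actions of Player B against the Player A mixed strategy `σA`. -/
def optActs (u : A → B → ℝ) (σA : FDist A) : Set B :=
  { b | outB u σA b = valStratGF u σA }

/-- μ_v : the lift of a valuation of the states to the Nature states. -/
def lift (dist : D → FDist Q) (v : Q → ℝ) (d : D) : ℝ := ∑ q, (dist d).1 q * v q

/-- The payoff function of the local interaction `F_q` valued by `μ_m`. -/
def locPay (δ : Q → A → B → D) (dist : D → FDist Q) (m : Q → ℝ) (q : Q) : A → B → ℝ :=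
  fun a b => lift dist m (δ q a b)

/-- One-step transition probability between states. -/
def step (δ : Q → A → B → D) (dist : D → FDist Q) (σA : FDist A) (σB : FDist B)
    (q q' : Q) : ℝ :=
  ∑ a, ∑ b, σA.1 a * σB.1 b * (dist (δ q a b)).1 q'

/-- The operator Δ on valuations of the states. -/
def Δop (δ : Q → A → B → D) (dist : D → FDist Q) (T : Q) (v : Q → ℝ) : Q → ℝ :=
  fun q => if q = T then 1 else valGF (fun a b => lift dist v (δ q a b))

/-- The target `T` is an absorbing (self-looping) sink. -/
def Absorbing (δ : Q → A → B → D) (dist : D → FDist Q) (T : Q) : Prop :=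
  ∀ a b, (dist (δ T a b)).1 = fun q => if q = T then 1 else 0

/-- `m` is the least fixed point of Δ on `[0,1]^Q`. -/
def IsLfpDelta (δ : Q → A → B → D) (dist : D → FDist Q) (T : Q) (m : Q → ℝ) : Prop :=
  (∀ q, m q ∈ Set.Icc (0:ℝ) 1) ∧ Δop δ dist T m = m ∧
    ∀ v : Q → ℝ, (∀ q, v q ∈ Set.Icc (0:ℝ) 1) → Δop δ dist T v = v → ∀ q, m q ≤ v q

/-- A strategy: a history of past states together with the current state gives a
mixed action.  (This encodes maps `Q⁺ → 𝒟(X)`.) -/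
def Strat (Q X : Type) [Fintype X] : Type := List Q → Q → FDist X

/-- Residual strategy after the history `π` has been played. -/
def residual {X : Type} [Fintype X] (s : Strat Q X) (π : List Q) : Strat Q X :=
  fun h q => s (π ++ h) q

/-- The (positional) strategy associated with a per-state choice of mixed actions. -/
def ofPos {X : Type} [Fintype X] (s : Q → FDist X) : Strat Q X := fun _ q => s q

/-- Probability of reaching the set `S` within `n` steps from current state `q`,
history `h` having been played. -/
def reachSetNAux (δ : Q → A → B → D) (dist : D → FDist Q) (S : Set Q) :
    ℕ → Strat Q A → Strat Q B → List Q → Q → ℝ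
  | 0, _, _, _, q => if q ∈ S then 1 else 0
  | n + 1, sA, sB, h, q =>
      if q ∈ S then 1
      else ∑ q', step δ dist (sA h q) (sB h q) q q' *
        reachSetNAux δ dist S n sA sB (h ++ [q]) q'

/-- Probability of reaching the set `S` within `n` steps from state `q`. -/
def reachSetN (δ : Q → A → B → D) (dist : D → FDist Q) (S : Set Q) (n : ℕ)
    (sA : Strat Q A) (sB : Strat Q B) (q : Q) : ℝ :=
  reachSetNAux δ dist S n sA sB [] q

/-- Probability of reaching the target `T` within `n` steps from state `q`. -/
def reachN (δ : Q → A → B → D) (dist : D → FDist Q) (T : Q) (n : ℕ)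
    (sA : Strat Q A) (sB : Strat Q B) (q : Q) : ℝ :=
  reachSetN δ dist {T} n sA sB q

/-- Probability of eventually reaching the target `T` from state `q`. -/
def reach (δ : Q → A → B → D) (dist : D → FDist Q) (T : Q)
    (sA : Strat Q A) (sB : Strat Q B) (q : Q) : ℝ :=
  ⨆ n : ℕ, reachN δ dist T n sA sB q

/-- The value of a Player A strategy from state `q`. -/
def valA (δ : Q → A → B → D) (dist : D → FDist Q) (T : Q) (sA : Strat Q A) (q : Q) : ℝ :=
  ⨅ sB : Strat Q B, reach δ dist T sA sB q

/-- The value of the game from state `q`. -/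
def value (δ : Q → A → B → D) (dist : D → FDist Q) (T : Q) (q : Q) : ℝ :=
  ⨆ sA : Strat Q A, valA δ dist T sA q

/-- A state is maximizable when Player A has an optimal strategy from it. -/
def Maximizable (δ : Q → A → B → D) (dist : D → FDist Q) (T q : Q) : Prop :=
  ∃ sA : Strat Q A, valA δ dist T sA q = value δ dist T q

/-- A positional Player A strategy locally dominates the valuation `v`. -/
def LocallyDominates (δ : Q → A → B → D) (dist : D → FDist Q)
    (sA : Q → FDist A) (v : Q → ℝ) : Prop :=
  ∀ q, v q ≤ valStratGF (fun a b => lift dist v (δ q a b)) (sA q)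

/-- Transition function ι of the MDP induced by a positional Player A strategy. -/
def stepB [DecidableEq B] (δ : Q → A → B → D) (dist : D → FDist Q)
    (sA : Q → FDist A) (q : Q) (b : B) (q' : Q) : ℝ :=
  step δ dist (sA q) (dirac b) q q'

/-- An end component of the MDP induced by the positional Player A strategy `sA`. -/
structure EndComp [DecidableEq B] (δ : Q → A → B → D) (dist : D → FDist Q)
    (sA : Q → FDist A) where
  states : Set Q
  acts : Q → Set B
  acts_nonempty : ∀ q ∈ states, (acts q).Nonempty
  closed : ∀ q ∈ states, ∀ b ∈ acts q, ∀ q', stepB δ dist sA q b q' ≠ 0 → q' ∈ states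
  connected : ∀ q ∈ states, ∀ q' ∈ states,
    Relation.ReflTransGen
      (fun x y => x ∈ states ∧ ∃ b ∈ acts x, stepB δ dist sA x b y ≠ 0) q q'

/-- `S_D` : the Nature states having a non-zero probability to reach `S`. -/
def natS (dist : D → FDist Q) (S : Set Q) : Set D :=
  { d | ∃ q ∈ S, (dist d).1 q ≠ 0 }

/-- Progressive optimal local strategies at `q` w.r.t. the set `Gd`. -/
def Prog (δ : Q → A → B → D) (dist : D → FDist Q) (m : Q → ℝ) (q : Q)
    (Gd : Set Q) : Set (FDist A) :=
  { σA | σA ∈ OptA (locPay δ dist m q) ∧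
      ∀ b ∈ optActs (locPay δ dist m q) σA, ∃ a ∈ supp σA, δ q a b ∈ natS dist Gd }

/-- Risky optimal local strategies at `q` w.r.t. the set `Bd`. -/
def Risk (δ : Q → A → B → D) (dist : D → FDist Q) (m : Q → ℝ) (q : Q)
    (Bd : Set Q) : Set (FDist A) :=
  { σA | σA ∈ OptA (locPay δ dist m q) ∧
      ∃ b ∈ optActs (locPay δ dist m q) σA, ∃ a ∈ supp σA, δ q a b ∈ natS dist Bd }

/-- Efficient local strategies: progressive and not risky. -/
def Eff (δ : Q → A → B → D) (dist : D → FDist Q) (m : Q → ℝ) (q : Q)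
    (Gd Bd : Set Q) : Set (FDist A) :=
  Prog δ dist m q Gd \ Risk δ dist m q Bd

/-- The increasing sequence of sets of secure states w.r.t. `Bd`. -/
def SecN (δ : Q → A → B → D) (dist : D → FDist Q) (m : Q → ℝ) (T : Q) (Bd : Set Q) :
    ℕ → Set Q
  | 0 => {T}
  | n + 1 => SecN δ dist m T Bd n ∪
      { q | q ∉ Bd ∧ (Eff δ dist m q (SecN δ dist m T Bd n) Bd).Nonempty }

/-- The set of secure states w.r.t. `Bd`. -/
def Sec (δ : Q → A → B → D) (dist : D → FDist Q) (m : Q → ℝ) (T : Q) (Bd : Set Q) :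
    Set Q :=
  (⋃ n : ℕ, SecN δ dist m T Bd n) ∪ { q | m q = 0 }

/-- The sequence of sets of bad states. -/
def BadN (δ : Q → A → B → D) (dist : D → FDist Q) (m : Q → ℝ) (T : Q) : ℕ → Set Q
  | 0 => ∅
  | n + 1 => (Sec δ dist m T (BadN δ dist m T n))ᶜ

/-- The set of bad states. -/
def Bad (δ : Q → A → B → D) (dist : D → FDist Q) (m : Q → ℝ) (T : Q) : Set Q :=
  BadN δ dist m T (Fintype.card Q)

/-- `α[y]` : the total valuation extending the partial valuation `α : O∖E → [0,1]`
with the value `y` on `E`. -/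
def extendVal {O : Type} (E : Set O) (α : O → ℝ) (y : ℝ) : O → ℝ :=
  fun o => if o ∈ E then y else α o

/-- The map `f_α : y ↦ val_{⟨F, α[y]⟩}`. -/
def fval {O : Type} (ρ : A → B → O) (E : Set O) (α : O → ℝ) (y : ℝ) : ℝ :=
  valGF (fun a b => extendVal E α y (ρ a b))

/-- `v` is the least fixed point of `f_α` on `[0,1]`. -/
def IsLfpVal {O : Type} (ρ : A → B → O) (E : Set O) (α : O → ℝ) (v : ℝ) : Prop :=
  v ∈ Set.Icc (0:ℝ) 1 ∧ fval ρ E α v = v ∧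
    ∀ y ∈ Set.Icc (0:ℝ) 1, fval ρ E α y = y → v ≤ y

/-- The game form `ρ` is reach-maximizable w.r.t. the partial valuation `α : O∖E → [0,1]`. -/
def RMwrt {O : Type} (ρ : A → B → O) (E : Set O) (α : O → ℝ) : Prop :=
  ∀ v : ℝ, IsLfpVal ρ E α v →
    v = 0 ∨
      ∃ σA ∈ OptA (fun a b => extendVal E α v (ρ a b)),
        ∀ b ∈ optActs (fun a b => extendVal E α v (ρ a b)) σA,
          ∃ a ∈ supp σA, ρ a b ∉ E

/-- A reach-maximizable game form: RM w.r.t. every partial valuation of its outcomes. -/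
def RMform {O : Type} (ρ : A → B → O) : Prop :=
  ∀ (E : Set O) (α : O → ℝ), (∀ o ∉ E, α o ∈ Set.Icc (0:ℝ) 1) → RMwrt ρ E α

/-- A determined game form. -/
def Determined {O : Type} (ρ : A → B → O) : Prop :=
  ∀ E : Set O, (∃ a, ∀ b, ρ a b ∈ E) ∨ (∃ b, ∀ a, ρ a b ∉ E)

/-- Transition function of the three-state reachability game `C_{(F,α)}`:
state `0` is `q₀`, state `1` is the target `⊤`, state `2` is the bin `⊥`. -/
def triδ {O : Type} (ρ : A → B → O) (E : Set O) :
    Fin 3 → A → B → (Fin 3 ⊕ {o : O // o ∉ E}) :=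
  fun s a b =>
    if s = 0 then
      if h : ρ a b ∈ E then Sum.inl 0 else Sum.inr ⟨ρ a b, h⟩
    else Sum.inl s

/-- Nature distributions of the three-state reachability game `C_{(F,α)}`. -/
def triDist {O : Type} (E : Set O) (α : O → ℝ)
    (hα : ∀ o ∉ E, α o ∈ Set.Icc (0:ℝ) 1) :
    (Fin 3 ⊕ {o : O // o ∉ E}) → FDist (Fin 3) := fun d =>
  match d with
  | Sum.inl t => dirac t
  | Sum.inr x =>
      ⟨![0, α x.1, 1 - α x.1], by
        obtain ⟨h0, h1⟩ := hα x.1 x.2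
        constructor
        · intro s
          fin_cases s <;> simp <;> linarith
        · simp [Fin.sum_univ_three]⟩

/-- An abstract (finite) game form with actions `A` and `B`. -/
structure GameForm (A B : Type) where
  O : Type
  fin : Fintype O
  ρ : A → B → O

/-- All local interactions of the arena `δ` belong to the set `𝒢` of game forms
(up to a renaming of the outcomes into Nature states). -/
def UsesForms {Q D : Type} (𝒢 : Set (GameForm A B)) (δ : Q → A → B → D) : Prop :=
  ∀ q, ∃ F ∈ 𝒢, ∃ g : F.O → D, δ q = fun a b => g (F.ρ a b)

/-- The sequence of iterates of Δ starting from the valuation `1_{⊤}`. -/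
def vseq (δ : Q → A → B → D) (dist : D → FDist Q) (T : Q) : ℕ → Q → ℝ
  | 0 => fun q => if q = T then 1 else 0
  | n + 1 => Δop δ dist T (vseq δ dist T n)

/-- Relevant paths w.r.t. the strategy `sA` from the state `q₀`: the pair `(h, q)`
encodes the path `h · q` (history `h`, current state `q`). -/
inductive Relevant [DecidableEq B] (δ : Q → A → B → D) (dist : D → FDist Q)
    (m : Q → ℝ) (sA : Strat Q A) (q₀ : Q) : List Q → Q → Prop
  | base : Relevant δ dist m sA q₀ [] q₀
  | step {h : List Q} {q q' : Q} :
      Relevant δ dist m sA q₀ h q →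
      (∃ b ∈ optActs (locPay δ dist m q) (sA h q),
        0 < CRG.step δ dist (sA h q) (dirac b) q q') →
      Relevant δ dist m sA q₀ (h ++ [q]) q'

end CRG

/-! The value `m` is approached from below by the iterates `vseq n = Δⁿ(1_⊤)`. Since Δ is
monotone and `Δ (v + c) ≤ Δ v + c`, the supremum of the iterates is a fixed point of Δ in
`[0,1]^Q` (the convergence is uniform as `Q` is finite), so it dominates the least fixed point `m`.
Fix `n` with `m ≤ vseq n + ε/2`. When `k` steps remain, Player A plays an `η`-optimal strategy of
the local game valued by `vseq k`; by induction on `k`, against every Player B strategy this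
reaches `⊤` within `k` steps with probability at least `vseq k - k η`. Take `n η ≤ ε/2`. -/

namespace CRG

variable {A B Q D : Type} [Fintype A] [Fintype B] [Fintype Q]

section Average

variable {X : Type} [Fintype X] {w : X → ℝ}

theorem sum_mul_const_of_sum_eq_one (hw : ∑ x, w x = 1) (c : ℝ) : ∑ x, w x * c = c := by
  rw [← Finset.sum_mul, hw, one_mul]

theorem sum_mul_le_sum_mul_add (hw₀ : ∀ x, 0 ≤ w x) (hw : ∑ x, w x = 1) {f g : X → ℝ} {c : ℝ}
    (h : ∀ x, f x ≤ g x + c) : ∑ x, w x * f x ≤ ∑ x, w x * g x + c :=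
  calc ∑ x, w x * f x ≤ ∑ x, w x * (g x + c) :=
        Finset.sum_le_sum fun x _ => mul_le_mul_of_nonneg_left (h x) (hw₀ x)
    _ = ∑ x, w x * g x + c := by
        simp only [mul_add, Finset.sum_add_distrib, sum_mul_const_of_sum_eq_one hw]

theorem sum_mul_mem_Icc (hw₀ : ∀ x, 0 ≤ w x) (hw : ∑ x, w x = 1) {f : X → ℝ} {lo hi : ℝ}
    (h : ∀ x, f x ∈ Set.Icc lo hi) : ∑ x, w x * f x ∈ Set.Icc lo hi := by
  constructor
  · simpa [sum_mul_const_of_sum_eq_one hw] using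
      sum_mul_le_sum_mul_add hw₀ hw (f := fun _ => lo) (c := 0) fun x => by simpa using (h x).1
  · simpa [sum_mul_const_of_sum_eq_one hw] using
      sum_mul_le_sum_mul_add hw₀ hw (g := fun _ => hi) (c := 0) fun x => by simpa using (h x).2

end Average

instance {X : Type} [Fintype X] [Nonempty X] : Nonempty (FDist X) :=
  ⟨dirac (Classical.arbitrary X)⟩

instance {X : Type} [Fintype X] [Nonempty (FDist X)] : Nonempty (Strat Q X) :=
  ⟨fun _ _ => Classical.arbitrary _⟩

section NormalForm

variable {u u' : A → B → ℝ} {c : ℝ}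

theorem out_eq_sum_prod (u : A → B → ℝ) (σA : FDist A) (σB : FDist B) :
    out u σA σB = ∑ p : A × B, σA.1 p.1 * σB.1 p.2 * u p.1 p.2 :=
  (Fintype.sum_prod_type' _).symm

theorem out_le_out_add (h : ∀ a b, u a b ≤ u' a b + c) (σA : FDist A) (σB : FDist B) :
    out u σA σB ≤ out u' σA σB + c := by
  have hw : ∑ p : A × B, σA.1 p.1 * σB.1 p.2 = 1 := by
    simp only [Fintype.sum_prod_type, ← Finset.sum_mul_sum, σA.2.2, σB.2.2, one_mul]
  simp only [out_eq_sum_prod]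
  exact sum_mul_le_sum_mul_add (fun p : A × B => mul_nonneg (σA.2.1 p.1) (σB.2.1 p.2)) hw
    fun p => h p.1 p.2

theorem out_const (σA : FDist A) (σB : FDist B) : out (fun (_ : A) (_ : B) => c) σA σB = c := by
  simp only [out, ← Finset.sum_mul, ← Finset.sum_mul_sum, σA.2.2, σB.2.2, one_mul]

theorem exists_valGF_sub_lt_valStratGF [Nonempty A] (u : A → B → ℝ) {η : ℝ} (hη : 0 < η) :
    ∃ σA, valGF u - η < valStratGF u σA :=
  exists_lt_of_lt_ciSup (sub_lt_self (valGF u) hη)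

theorem valStratGF_const [Nonempty B] (σA : FDist A) :
    valStratGF (fun (_ : A) (_ : B) => c) σA = c := by
  simp only [valStratGF, out_const, ciInf_const]

variable [Nonempty A] [Nonempty B]

theorem bddBelow_range_out (u : A → B → ℝ) (σA : FDist A) :
    BddBelow (Set.range fun σB => out u σA σB) := by
  obtain ⟨p, hp⟩ := Finite.exists_min fun p : A × B => u p.1 p.2
  refine ⟨u p.1 p.2, ?_⟩
  rintro _ ⟨σB, rfl⟩
  have := out_le_out_add (u := fun _ _ => u p.1 p.2) (c := 0)
    (fun a b => by simpa using hp (a, b)) σA σB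
  rwa [out_const, add_zero] at this

theorem valStratGF_le_out (u : A → B → ℝ) (σA : FDist A) (σB : FDist B) :
    valStratGF u σA ≤ out u σA σB :=
  ciInf_le (bddBelow_range_out u σA) σB

theorem valStratGF_le_add (h : ∀ a b, u a b ≤ u' a b + c) (σA : FDist A) :
    valStratGF u σA ≤ valStratGF u' σA + c := by
  rw [← sub_le_iff_le_add]
  exact le_ciInf fun σB => by
    linarith [valStratGF_le_out u σA σB, out_le_out_add h σA σB]

theorem bddAbove_range_valStratGF (u : A → B → ℝ) :
    BddAbove (Set.range fun σA => valStratGF u σA) := by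
  obtain ⟨p, hp⟩ := Finite.exists_max fun p : A × B => u p.1 p.2
  refine ⟨u p.1 p.2, ?_⟩
  rintro _ ⟨σA, rfl⟩
  have := valStratGF_le_add (u' := fun _ _ => u p.1 p.2) (c := 0)
    (fun a b => by simpa using hp (a, b)) σA
  rwa [valStratGF_const, add_zero] at this

theorem valGF_le_add (h : ∀ a b, u a b ≤ u' a b + c) : valGF u ≤ valGF u' + c :=
  ciSup_le fun σA => (valStratGF_le_add h σA).trans <|
    add_le_add_left (le_ciSup (bddAbove_range_valStratGF u') σA) c

theorem valGF_mono (h : ∀ a b, u a b ≤ u' a b) : valGF u ≤ valGF u' := by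
  simpa using valGF_le_add (c := 0) fun a b => by simpa using h a b

theorem valGF_const : valGF (fun (_ : A) (_ : B) => c) = c := by
  simp only [valGF, valStratGF_const, ciSup_const]

theorem valGF_mem_Icc (h : ∀ a b, u a b ∈ Set.Icc (0 : ℝ) 1) : valGF u ∈ Set.Icc (0 : ℝ) 1 := by
  constructor
  · simpa only [valGF_const] using valGF_mono (u := fun _ _ => 0) fun a b => (h a b).1
  · simpa only [valGF_const] using valGF_mono (u' := fun _ _ => 1) fun a b => (h a b).2

end NormalForm

theorem lift_le_lift_add (dist : D → FDist Q) {v w : Q → ℝ} {c : ℝ} (h : ∀ q, v q ≤ w q + c)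
    (d : D) : lift dist v d ≤ lift dist w d + c :=
  sum_mul_le_sum_mul_add (dist d).2.1 (dist d).2.2 h

theorem lift_const (dist : D → FDist Q) (c : ℝ) (d : D) : lift dist (fun _ => c) d = c :=
  sum_mul_const_of_sum_eq_one (dist d).2.2 c

theorem lift_mem_Icc (dist : D → FDist Q) {v : Q → ℝ} (h : ∀ q, v q ∈ Set.Icc (0 : ℝ) 1)
    (d : D) : lift dist v d ∈ Set.Icc (0 : ℝ) 1 :=
  sum_mul_mem_Icc (dist d).2.1 (dist d).2.2 h

section Iterates

variable [Nonempty A] [Nonempty B] (δ : Q → A → B → D) (dist : D → FDist Q) (T : Q)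

theorem Δop_le_add {v w : Q → ℝ} {c : ℝ} (hc : 0 ≤ c) (h : ∀ q, v q ≤ w q + c) (q : Q) :
    Δop δ dist T v q ≤ Δop δ dist T w q + c := by
  unfold Δop
  split
  · linarith
  · exact valGF_le_add fun a b => lift_le_lift_add dist h (δ q a b)

theorem Δop_mono : Monotone (Δop δ dist T) := fun v w h q => by
  simpa using Δop_le_add δ dist T le_rfl (fun q => by simpa using h q) q

theorem Δop_mem_Icc {v : Q → ℝ} (h : ∀ q, v q ∈ Set.Icc (0 : ℝ) 1) (q : Q) :
    Δop δ dist T v q ∈ Set.Icc (0 : ℝ) 1 := by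
  unfold Δop
  split
  · simp
  · exact valGF_mem_Icc fun a b => lift_mem_Icc dist h (δ q a b)

theorem vseq_mem_Icc (n : ℕ) (q : Q) : vseq δ dist T n q ∈ Set.Icc (0 : ℝ) 1 := by
  induction n generalizing q with
  | zero => simp only [vseq]; split <;> simp
  | succ n ih => exact Δop_mem_Icc δ dist T ih q

theorem vseq_mono : Monotone (vseq δ dist T) := by
  refine monotone_nat_of_le_succ fun n => ?_
  induction n with
  | zero =>
    intro q
    by_cases hq : q = T
    · simp [vseq, Δop, hq]
    · simpa [vseq, hq] using (vseq_mem_Icc δ dist T 1 q).1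
  | succ n ih => exact Δop_mono δ dist T ih

def vlim (q : Q) : ℝ := ⨆ n, vseq δ dist T n q

theorem vseq_le_vlim (n : ℕ) (q : Q) : vseq δ dist T n q ≤ vlim δ dist T q :=
  le_ciSup (f := fun n => vseq δ dist T n q)
    ⟨1, by rintro _ ⟨k, rfl⟩; exact (vseq_mem_Icc δ dist T k q).2⟩ n

theorem vlim_mem_Icc (q : Q) : vlim δ dist T q ∈ Set.Icc (0 : ℝ) 1 :=
  ⟨(vseq_mem_Icc δ dist T 0 q).1.trans (vseq_le_vlim δ dist T 0 q),
    ciSup_le fun n => (vseq_mem_Icc δ dist T n q).2⟩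

theorem exists_vlim_le_vseq_add {t : ℝ} (ht : 0 < t) :
    ∃ n, ∀ q, vlim δ dist T q ≤ vseq δ dist T n q + t := by
  have hq (q : Q) : ∃ n, vlim δ dist T q - t < vseq δ dist T n q :=
    exists_lt_of_lt_ciSup (sub_lt_self _ ht)
  choose N hN using hq
  refine ⟨Finset.univ.sup N, fun q => ?_⟩
  have := vseq_mono δ dist T (Finset.le_sup (f := N) (Finset.mem_univ q)) q
  linarith [hN q]

theorem Δop_vlim : Δop δ dist T (vlim δ dist T) = vlim δ dist T := by
  funext q
  apply le_antisymm
  · refine le_of_forall_pos_le_add fun t ht => ?_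
    obtain ⟨n, hn⟩ := exists_vlim_le_vseq_add δ dist T ht
    calc Δop δ dist T (vlim δ dist T) q ≤ vseq δ dist T (n + 1) q + t :=
          Δop_le_add δ dist T ht.le hn q
      _ ≤ vlim δ dist T q + t := by gcongr; exact vseq_le_vlim δ dist T (n + 1) q
  · exact ciSup_le fun n => (vseq_mono δ dist T n.le_succ q).trans <|
      Δop_mono δ dist T (vseq_le_vlim δ dist T n) q

theorem exists_sub_le_vseq {m : Q → ℝ} (hm : IsLfpDelta δ dist T m) {t : ℝ} (ht : 0 < t) :
    ∃ n, ∀ q, m q - t ≤ vseq δ dist T n q := by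
  obtain ⟨n, hn⟩ := exists_vlim_le_vseq_add δ dist T ht
  refine ⟨n, fun q => ?_⟩
  linarith [hm.2.2 _ (vlim_mem_Icc δ dist T) (Δop_vlim δ dist T) q, hn q]

end Iterates

section Reach

variable (δ : Q → A → B → D) (dist : D → FDist Q) (T : Q)

theorem sum_step_mul (σA : FDist A) (σB : FDist B) (q : Q) (v : Q → ℝ) :
    ∑ q', step δ dist σA σB q q' * v q' = out (fun a b => lift dist v (δ q a b)) σA σB := by
  simp only [step, out, lift, Finset.sum_mul, Finset.mul_sum]
  rw [Finset.sum_comm]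
  refine Finset.sum_congr rfl fun a _ => ?_
  rw [Finset.sum_comm]
  exact Finset.sum_congr rfl fun b _ => Finset.sum_congr rfl fun q' _ => by ring

theorem step_nonneg (σA : FDist A) (σB : FDist B) (q q' : Q) : 0 ≤ step δ dist σA σB q q' :=
  Finset.sum_nonneg fun a _ => Finset.sum_nonneg fun b _ =>
    mul_nonneg (mul_nonneg (σA.2.1 a) (σB.2.1 b)) ((dist (δ q a b)).2.1 q')

theorem sum_step (σA : FDist A) (σB : FDist B) (q : Q) : ∑ q', step δ dist σA σB q q' = 1 := by
  simpa [lift_const, out_const] using sum_step_mul δ dist σA σB q fun _ => 1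

theorem reachSetNAux_mem_Icc (S : Set Q) (n : ℕ) (sA : Strat Q A) (sB : Strat Q B) (h : List Q)
    (q : Q) : reachSetNAux δ dist S n sA sB h q ∈ Set.Icc (0 : ℝ) 1 := by
  induction n generalizing h q with
  | zero => simp only [reachSetNAux]; split <;> simp
  | succ n ih =>
    simp only [reachSetNAux]
    split
    · simp
    · exact sum_mul_mem_Icc (step_nonneg δ dist _ _ q) (sum_step δ dist _ _ q) fun q' => ih _ q'

theorem reachN_le_reach (n : ℕ) (sA : Strat Q A) (sB : Strat Q B) (q : Q) :
    reachN δ dist T n sA sB q ≤ reach δ dist T sA sB q :=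
  le_ciSup (f := fun n => reachN δ dist T n sA sB q)
    ⟨1, by rintro _ ⟨k, rfl⟩; exact (reachSetNAux_mem_Icc δ dist _ k sA sB [] q).2⟩ n

theorem reach_mem_Icc (sA : Strat Q A) (sB : Strat Q B) (q : Q) :
    reach δ dist T sA sB q ∈ Set.Icc (0 : ℝ) 1 :=
  ⟨(reachSetNAux_mem_Icc δ dist _ 0 sA sB [] q).1.trans (reachN_le_reach δ dist T 0 sA sB q),
    ciSup_le fun n => (reachSetNAux_mem_Icc δ dist _ n sA sB [] q).2⟩

theorem le_valA_of_le_reachN [Nonempty B] {x : ℝ} {n : ℕ} {sA : Strat Q A} {q : Q}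
    (h : ∀ sB, x ≤ reachN δ dist T n sA sB q) : x ≤ valA δ dist T sA q :=
  le_ciInf fun sB => (h sB).trans (reachN_le_reach δ dist T n sA sB q)

theorem valA_le_value [Nonempty B] (sA : Strat Q A) (q : Q) :
    valA δ dist T sA q ≤ value δ dist T q := by
  refine le_ciSup (f := fun sA => valA δ dist T sA q) ⟨1, ?_⟩ sA
  rintro _ ⟨sA', rfl⟩
  obtain ⟨sB⟩ := (inferInstance : Nonempty (Strat Q B))
  exact (ciInf_le ⟨0, by rintro _ ⟨sB', rfl⟩; exact (reach_mem_Icc δ dist T sA' sB' q).1⟩ sB).trans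
    (reach_mem_Icc δ dist T sA' sB q).2

end Reach

/-- Plays `σ k` when `k` steps remain before the horizon `n`. -/
def countdown (σ : ℕ → Q → FDist A) (n : ℕ) : Strat Q A := fun h q => σ (n - 1 - h.length) q

section Construction

variable [Nonempty A] [Nonempty B] (δ : Q → A → B → D) (dist : D → FDist Q) (T : Q)

theorem vseq_le_reachSetNAux_add {σ : ℕ → Q → FDist A} {η : ℝ} (hη : 0 ≤ η)
    (hσ : ∀ k q, valGF (fun a b => lift dist (vseq δ dist T k) (δ q a b)) ≤
      valStratGF (fun a b => lift dist (vseq δ dist T k) (δ q a b)) (σ k q) + η)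
    (n : ℕ) (sB : Strat Q B) (k : ℕ) (h : List Q) (q : Q) (hk : k + h.length = n) :
    vseq δ dist T k q ≤ reachSetNAux δ dist {T} k (countdown σ n) sB h q + k * η := by
  induction k generalizing h q with
  | zero => by_cases hq : q = T <;> simp [vseq, reachSetNAux, hq]
  | succ k ih =>
    by_cases hq : q = T
    · have := (vseq_mem_Icc δ dist T (k + 1) q).2
      simp only [reachSetNAux, hq, Set.mem_singleton_iff, if_true] at this ⊢
      linarith [mul_nonneg (Nat.cast_nonneg (α := ℝ) (k + 1)) hη]
    have hσq : countdown σ n h q = σ k q := by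
      simp only [countdown]; congr 1; omega
    set u := fun a b => lift dist (vseq δ dist T k) (δ q a b)
    calc vseq δ dist T (k + 1) q = valGF u := by simp [vseq, Δop, hq, u]
      _ ≤ valStratGF u (σ k q) + η := hσ k q
      _ ≤ out u (σ k q) (sB h q) + η := by gcongr; exact valStratGF_le_out u _ _
      _ = ∑ q', step δ dist (σ k q) (sB h q) q q' * vseq δ dist T k q' + η := by
          rw [sum_step_mul]
      _ ≤ ∑ q', step δ dist (σ k q) (sB h q) q q' *
            reachSetNAux δ dist {T} k (countdown σ n) sB (h ++ [q]) q' + k * η + η := by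
          gcongr
          exact sum_mul_le_sum_mul_add (step_nonneg δ dist _ _ q) (sum_step δ dist _ _ q)
            fun q' => ih (h ++ [q]) q' (by simp; omega)
      _ = reachSetNAux δ dist {T} (k + 1) (countdown σ n) sB h q + (k + 1 : ℕ) * η := by
          simp only [reachSetNAux, Set.mem_singleton_iff, hq, if_false, hσq]
          push_cast; ring

theorem exists_strat_sub_le_reachN {m : Q → ℝ} (hm : IsLfpDelta δ dist T m) {ε : ℝ}
    (hε : 0 < ε) : ∃ (sA : Strat Q A) (n : ℕ), ∀ q sB, m q - ε ≤ reachN δ dist T n sA sB q := by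
  obtain ⟨n, hn⟩ := exists_sub_le_vseq δ dist T hm (half_pos hε)
  set η := ε / 2 / (n + 1) with hη
  have hη₀ : 0 < η := by positivity
  have hnη : n * η ≤ ε / 2 := by
    rw [hη, mul_div_assoc', div_le_iff₀ (by positivity)]
    linarith
  choose σ hσ using fun k q =>
    exists_valGF_sub_lt_valStratGF (fun a b => lift dist (vseq δ dist T k) (δ q a b)) hη₀
  refine ⟨countdown σ n, n, fun q sB => ?_⟩
  have : vseq δ dist T n q ≤ reachN δ dist T n (countdown σ n) sB q + n * η :=
    vseq_le_reachSetNAux_add δ dist T hη₀.le (fun k q => (sub_lt_iff_lt_add.1 (hσ k q)).le)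
      n sB n [] q rfl
  linarith [hn q]

end Construction

end CRG

theorem stmt1_general
    {A B Q D : Type} [Fintype A] [Fintype B] [Fintype Q]
    [Nonempty A] [Nonempty B]
    (δ : Q → A → B → D) (dist : D → FDist Q) (T : Q)
    (m : Q → ℝ) (hm : CRG.IsLfpDelta δ dist T m) :
    ∀ ε : ℝ, 0 < ε →
      ∃ (sA : CRG.Strat Q A) (n : ℕ),
        (∀ (q : Q) (sB : CRG.Strat Q B), m q - ε ≤ CRG.reachN δ dist T n sA sB q) ∧
        (∀ q : Q, m q - ε ≤ CRG.valA δ dist T sA q) ∧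
        (∀ q : Q, m q ≤ CRG.value δ dist T q) := by
  intro ε hε
  obtain ⟨sA, n, hreach⟩ := CRG.exists_strat_sub_le_reachN δ dist T hm hε
  refine ⟨sA, n, hreach, fun q => CRG.le_valA_of_le_reachN δ dist T (hreach q), fun q => ?_⟩
  refine le_of_forall_pos_le_add fun t ht => ?_
  obtain ⟨sA', n', hreach'⟩ := CRG.exists_strat_sub_le_reachN δ dist T hm ht
  have := (CRG.le_valA_of_le_reachN δ dist T (hreach' q)).trans (CRG.valA_le_value δ dist T sA' q)
  linarith

/-- for every ε > 0, Player A has a strategy reaching the target within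
some number `n` of steps, with probability at least `m(q) - ε`, uniformly from every
state `q` and against every Player B strategy. -/
theorem stmt1
    {A B Q D : Type} [Fintype A] [Fintype B] [Fintype Q] [Fintype D]
    [Nonempty A] [Nonempty B] [Nonempty Q] [Nonempty D] [DecidableEq Q]
    (δ : Q → A → B → D) (dist : D → FDist Q) (T : Q)
    (habs : CRG.Absorbing δ dist T)
    (m : Q → ℝ) (hm : CRG.IsLfpDelta δ dist T m) :
    ∀ ε : ℝ, 0 < ε →
      ∃ (sA : CRG.Strat Q A) (n : ℕ),
        (∀ (q : Q) (sB : CRG.Strat Q B), m q - ε ≤ CRG.reachN δ dist T n sA sB q) ∧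
        (∀ q : Q, m q - ε ≤ CRG.valA δ dist T sA q) ∧
        (∀ q : Q, m q ≤ CRG.value δ dist T q) :=
  stmt1_general δ dist T m hm
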